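/- arXiv:2301.11185 — 2 statements merged into one kernel-verified Lean document; each statement's English description precedes it below -/
import Mathlib

section
/- Location of violating points (Lemma 1, 'crucial points'): suppose y₅ > 0, the discretized constraint f^c_{y,z}(t̄) ≥ 0 holds for every grid point t̄ ∈ T_N, and the semiinfinite constraint f^c_{y,z}(t) ≥ 0 for all t ∈ T is violated, i.e., f^c_{y,z}(t) < 0 for some t ∈ T. Then it is violated either at p_min = (2μy₅ + y₄ − y₃)/(2y₅) or at some point t' ∈ [x⁻ − δ, x⁻ + δ] ∪ [x⁺ − δ, x⁺ + δ] ∪ ⋃_{t̄∈T_N} [t̄ − δ, t̄ + δ], where δ > 0 is the (arbitrarily small) width of the neighborhoods of the jump points on which the Urysohn approximators may differ from the corresponding indicator functions. -/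
open Set

open Filter

lemma crucial_aux (f q : ℝ → ℝ) (A : Set ℝ) (hA : IsClosed A)
    (hfc : Continuous f) (hqc : Continuous q) (t pm : ℝ)
    (htA : t ∉ A) (hft : f t < 0)
    (heq : ∀ J : Set ℝ, t ∈ J → (∀ s ∈ J, ∀ u ∈ Set.uIcc s t, u ∈ J) →
      (∀ s ∈ J, s ∉ A) → ∀ s ∈ J, f s = q s)
    (hmono : ∀ s ∈ Set.uIcc pm t, q s ≤ q t) :
    f pm < 0 ∨ ∃ s ∈ A, s ∈ Set.uIcc pm t ∧ f s < 0 ∧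
      ∀ u ∈ Set.uIcc s t, u ≠ s → u ∉ A := by
  by_cases hS : (A ∩ Set.uIcc pm t).Nonempty
  · rcases lt_trichotomy pm t with hlt | heqt | hgt
    · -- pm < t, use sSup
      rw [Set.uIcc_of_le hlt.le] at hS ⊢
      set S := A ∩ Set.Icc pm t with hSdef
      have hScl : IsClosed S := hA.inter isClosed_Icc
      have hSbdd : BddAbove S := (bddAbove_Icc).mono Set.inter_subset_right
      set s0 := sSup S with hs0def
      have hs0 : s0 ∈ S := hScl.csSup_mem hS hSbdd
      have hs0t : s0 < t := lt_of_le_of_ne hs0.2.2 (fun h => htA (h ▸ hs0.1))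
      have havoid : ∀ s ∈ Set.Ioc s0 t, s ∉ A := by
        intro s hs hsA
        have : s ∈ S := ⟨hsA, le_trans hs0.2.1 hs.1.le, hs.2⟩
        exact absurd (le_csSup hSbdd this) (not_le.mpr hs.1)
      have hfq : ∀ s ∈ Set.Ioc s0 t, f s = q s := by
        refine heq _ ⟨hs0t, le_refl t⟩ ?_ havoid
        intro s hs u hu
        rw [Set.uIcc_of_le hs.2] at hu
        exact ⟨lt_of_lt_of_le hs.1 hu.1, hu.2⟩
      have hlim : f s0 = q s0 := by
        have hcl : s0 ∈ closure (Set.Ioc s0 t) := by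
          rw [closure_Ioc hs0t.ne]; exact ⟨le_refl _, hs0t.le⟩
        have hne : (nhdsWithin s0 (Set.Ioc s0 t)).NeBot :=
          mem_closure_iff_nhdsWithin_neBot.mp hcl
        have h1 : Tendsto f (nhdsWithin s0 (Set.Ioc s0 t)) (nhds (f s0)) :=
          hfc.continuousWithinAt
        have h2 : Tendsto q (nhdsWithin s0 (Set.Ioc s0 t)) (nhds (q s0)) :=
          hqc.continuousWithinAt
        have hev : f =ᶠ[nhdsWithin s0 (Set.Ioc s0 t)] q := by
          filter_upwards [self_mem_nhdsWithin] with u hu using hfq u hu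
        exact tendsto_nhds_unique (h1.congr' hev) h2
      refine Or.inr ⟨s0, hs0.1, hs0.2, ?_, ?_⟩
      · have := hmono s0 (by rw [Set.uIcc_of_le hlt.le]; exact hs0.2)
        have hft' : f t = q t := hfq t ⟨hs0t, le_refl t⟩
        linarith [hlim]
      · intro u hu hus
        rw [Set.uIcc_of_le hs0t.le] at hu
        exact havoid u ⟨lt_of_le_of_ne hu.1 (Ne.symm hus), hu.2⟩
    · subst heqt; exact Or.inl hft
    · -- t < pm, use sInf
      rw [Set.uIcc_of_ge hgt.le] at hS ⊢
      set S := A ∩ Set.Icc t pm with hSdef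
      have hScl : IsClosed S := hA.inter isClosed_Icc
      have hSbdd : BddBelow S := (bddBelow_Icc).mono Set.inter_subset_right
      set s0 := sInf S with hs0def
      have hs0 : s0 ∈ S := hScl.csInf_mem hS hSbdd
      have hs0t : t < s0 := lt_of_le_of_ne hs0.2.1 (fun h => htA (h ▸ hs0.1))
      have havoid : ∀ s ∈ Set.Ico t s0, s ∉ A := by
        intro s hs hsA
        have : s ∈ S := ⟨hsA, hs.1, le_trans hs.2.le hs0.2.2⟩
        exact absurd (csInf_le hSbdd this) (not_le.mpr hs.2)
      have hfq : ∀ s ∈ Set.Ico t s0, f s = q s := by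
        refine heq _ ⟨le_refl t, hs0t⟩ ?_ havoid
        intro s hs u hu
        rw [Set.uIcc_of_ge hs.1] at hu
        exact ⟨hu.1, lt_of_le_of_lt hu.2 hs.2⟩
      have hlim : f s0 = q s0 := by
        have hcl : s0 ∈ closure (Set.Ico t s0) := by
          rw [closure_Ico hs0t.ne]; exact ⟨hs0t.le, le_refl _⟩
        have hne : (nhdsWithin s0 (Set.Ico t s0)).NeBot :=
          mem_closure_iff_nhdsWithin_neBot.mp hcl
        have h1 : Tendsto f (nhdsWithin s0 (Set.Ico t s0)) (nhds (f s0)) :=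
          hfc.continuousWithinAt
        have h2 : Tendsto q (nhdsWithin s0 (Set.Ico t s0)) (nhds (q s0)) :=
          hqc.continuousWithinAt
        have hev : f =ᶠ[nhdsWithin s0 (Set.Ico t s0)] q := by
          filter_upwards [self_mem_nhdsWithin] with u hu using hfq u hu
        exact tendsto_nhds_unique (h1.congr' hev) h2
      refine Or.inr ⟨s0, hs0.1, hs0.2, ?_, ?_⟩
      · have := hmono s0 (by rw [Set.uIcc_of_ge hgt.le]; exact hs0.2)
        have hft' : f t = q t := hfq t ⟨le_refl t, hs0t⟩
        linarith [hlim]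
      · intro u hu hus
        rw [Set.uIcc_of_ge hs0t.le] at hu
        exact havoid u ⟨hu.1, lt_of_le_of_ne hu.2 hus⟩
  · -- no point of A between pm and t
    have havoid : ∀ s ∈ Set.uIcc pm t, s ∉ A := by
      intro s hs hsA; exact hS ⟨s, hsA, hs⟩
    have hfq : ∀ s ∈ Set.uIcc pm t, f s = q s := by
      refine heq _ Set.right_mem_uIcc ?_ havoid
      intro s hs u hu
      exact Set.uIcc_subset_uIcc hs Set.right_mem_uIcc hu
    left
    have h1 := hfq pm Set.left_mem_uIcc
    have h2 := hfq t Set.right_mem_uIcc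
    have := hmono pm Set.left_mem_uIcc
    linarith


set_option maxHeartbeats 2000000 in
/-- Location of violating points (Lemma 1, 'crucial points'): with `T = [0,M]`,
grid `T_N = {0, δ_N, …, M}`, `p_y(t) = −y₁ + y₂ + y₃t − y₄t + y₅(t² − 2μt)` with
`y₅ > 0`, `p_min = (2μy₅ + y₄ − y₃)/(2y₅)`, Urysohn approximators of the indicators
with jump-neighborhood width `δ`, and
`f^c_{y,z}(t) = p_y(t) + Σ_{τ∈T_N} 𝟙^c_{[τ,τ+δ_N)}(t) z_τ + x·𝟙^c_{[x⁻,x⁺]}(t)`: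
if `f^c_{y,z} ≥ 0` on all grid points but the semiinfinite constraint
`f^c_{y,z} ≥ 0` on `T` is violated somewhere, then it is violated either at `p_min`
or at a point `t'` of `[x⁻−δ, x⁻+δ] ∪ [x⁺−δ, x⁺+δ] ∪ ⋃_{t̄∈T_N} [t̄−δ, t̄+δ]`. -/
theorem crucial_points
    (M δN : ℝ) (n : ℕ) (hδN : 0 < δN) (hMpos : 0 < M) (hM : M = n * δN)
    (G : Finset ℝ) (hG : G = (Finset.range (n + 1)).image (fun k : ℕ => (k : ℝ) * δN))
    (μ : ℝ) (x xm xp : ℝ)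
    (hxm : xm ∈ Icc (0 : ℝ) M) (hxp : xp ∈ Icc (0 : ℝ) M) (hord : xm ≤ xp)
    (y : Fin 5 → ℝ) (hy : ∀ i, 0 ≤ y i) (hy5 : 0 < y 4)
    (z : ℝ → ℝ) (hz : ∀ τ ∈ G, 0 ≤ z τ)
    (δ : ℝ) (hδ : 0 < δ)
    (indX : ℝ → ℝ) (indG : ℝ → ℝ → ℝ)
    (hXcont : Continuous indX) (hGcont : ∀ τ, Continuous (indG τ))
    (hXge : ∀ t, x * (Icc xm xp).indicator (fun _ => (1 : ℝ)) t ≤ x * indX t)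
    (hGle : ∀ τ t, indG τ t ≤ (Ico τ (τ + δN)).indicator (fun _ => (1 : ℝ)) t)
    (hXeq : ∀ t, δ < |t - xm| → δ < |t - xp| →
      indX t = (Icc xm xp).indicator (fun _ => (1 : ℝ)) t)
    (hGeq : ∀ τ t, δ < |t - τ| → δ < |t - (τ + δN)| →
      indG τ t = (Ico τ (τ + δN)).indicator (fun _ => (1 : ℝ)) t)
    (p f : ℝ → ℝ)
    (hp : ∀ t, p t = -(y 0) + y 1 + y 2 * t - y 3 * t + y 4 * (t ^ 2 - 2 * μ * t))
    (hf : ∀ t, f t = p t + (∑ τ ∈ G, indG τ t * z τ) + x * indX t)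
    (pmin : ℝ) (hpmin : pmin = (2 * μ * y 4 + y 3 - y 2) / (2 * y 4))
    (hgridfeas : ∀ t ∈ G, 0 ≤ f t)
    (hviol : ∃ t ∈ Icc (0 : ℝ) M, f t < 0) :
    f pmin < 0 ∨
      ∃ t' ∈ Icc (0 : ℝ) M, f t' < 0 ∧
        t' ∈ Icc (xm - δ) (xm + δ) ∪ Icc (xp - δ) (xp + δ) ∪
          ⋃ τ ∈ G, Icc (τ - δ) (τ + δ) := by
  obtain ⟨t, htT, hft⟩ := hviol
  set A : Set ℝ := Icc (xm - δ) (xm + δ) ∪ Icc (xp - δ) (xp + δ) ∪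
      ⋃ τ ∈ G, Icc (τ - δ) (τ + δ) with hAdef
  by_cases htA : t ∈ A
  · exact Or.inr ⟨t, htT, hft, htA⟩
  -- basic membership facts
  have hGmem : ∀ k : ℕ, k ≤ n → ((k : ℝ) * δN) ∈ G := by
    intro k hk
    rw [hG]
    exact Finset.mem_image.mpr ⟨k, Finset.mem_range.mpr (by omega), rfl⟩
  have hGrev : ∀ τ ∈ G, ∃ k : ℕ, k ≤ n ∧ (k : ℝ) * δN = τ := by
    intro τ hτ
    rw [hG] at hτ
    obtain ⟨k, hk, hkτ⟩ := Finset.mem_image.mp hτ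
    exact ⟨k, Nat.lt_succ_iff.mp (Finset.mem_range.mp hk), hkτ⟩
  have hAIcc : ∀ τ ∈ G, ∀ u ∈ Icc (τ - δ) (τ + δ), u ∈ A :=
    fun τ hτ u hu => Set.mem_union_right _ (Set.mem_iUnion₂.mpr ⟨τ, hτ, hu⟩)
  have hxmA : xm ∈ A :=
    Set.mem_union_left _ (Set.mem_union_left _ ⟨by linarith, by linarith⟩)
  have hxpA : xp ∈ A :=
    Set.mem_union_left _ (Set.mem_union_right _ ⟨by linarith, by linarith⟩)
  have h0G : (0 : ℝ) ∈ G := by have := hGmem 0 (Nat.zero_le n); simpa using this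
  have hMG : M ∈ G := by rw [hM]; exact hGmem n le_rfl
  have hnotA : ∀ s : ℝ, s ∉ A → s ∉ Icc (xm - δ) (xm + δ) ∧ s ∉ Icc (xp - δ) (xp + δ) ∧
      ∀ τ ∈ G, s ∉ Icc (τ - δ) (τ + δ) := by
    intro s hs
    refine ⟨fun h => hs ?_, fun h => hs ?_, fun τ hτ h => hs (hAIcc τ hτ s h)⟩
    · exact Set.mem_union_left _ (Set.mem_union_left _ h)
    · exact Set.mem_union_left _ (Set.mem_union_right _ h)
  have habs : ∀ s a : ℝ, s ∉ Icc (a - δ) (a + δ) → δ < |s - a| := by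
    intro s a h
    rw [Set.mem_Icc, not_and_or, not_le, not_le] at h
    rcases h with h | h
    · rw [lt_abs]; right; linarith
    · rw [lt_abs]; left; linarith
  have htG : ∀ τ ∈ G, t ∉ Icc (τ - δ) (τ + δ) := (hnotA t htA).2.2
  have htM : t < M - δ := by
    have h := htG M hMG
    rw [Set.mem_Icc, not_and_or, not_le, not_le] at h
    rcases h with h | h
    · linarith
    · linarith [htT.2]
  have ht0 : δ < t := by
    have h := htG 0 h0G
    rw [Set.mem_Icc, not_and_or, not_le, not_le] at h
    rcases h with h | h
    · linarith [htT.1]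
    · linarith
  -- the grid cell containing t
  set k₀ : ℕ := ⌊t / δN⌋₊ with hk₀def
  set τ₀ : ℝ := (k₀ : ℝ) * δN with hτ₀def
  have hk0le : τ₀ ≤ t := by
    rw [hτ₀def]
    have h1 : (k₀ : ℝ) ≤ t / δN := Nat.floor_le (div_nonneg htT.1 hδN.le)
    calc (k₀ : ℝ) * δN ≤ (t / δN) * δN := by nlinarith
    _ = t := by field_simp
  have hk0lt : t < τ₀ + δN := by
    have h1 : t / δN < (k₀ : ℝ) + 1 := Nat.lt_floor_add_one (t / δN)
    have h2 : t < ((k₀ : ℝ) + 1) * δN := by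
      rw [← div_lt_iff₀ hδN] at *
      linarith
    rw [hτ₀def]; linarith [h2]
  have hk0n : k₀ < n := by
    rw [hk₀def]
    rw [Nat.floor_lt (div_nonneg htT.1 hδN.le)]
    rw [div_lt_iff₀ hδN]
    rw [hM] at htM
    linarith
  have hτ₀G : τ₀ ∈ G := hGmem k₀ hk0n.le
  have hτ₁G : τ₀ + δN ∈ G := by
    have h := hGmem (k₀ + 1) hk0n
    rwa [show ((k₀ + 1 : ℕ) : ℝ) * δN = τ₀ + δN by push_cast; rw [hτ₀def]; ring] at h
  have ht_tau0 : τ₀ + δ < t := by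
    have h := habs t τ₀ (htG τ₀ hτ₀G)
    rw [abs_of_nonneg (by linarith)] at h
    linarith
  have ht_tau1 : t < τ₀ + δN - δ := by
    have h := habs t (τ₀ + δN) (htG _ hτ₁G)
    rw [abs_of_nonpos (by linarith)] at h
    linarith
  -- the comparison quadratic
  have hkey : 2 * y 4 * pmin = 2 * μ * y 4 + y 3 - y 2 := by
    rw [hpmin]; field_simp
  have hpc : Continuous p := by
    rw [show p = fun u => -(y 0) + y 1 + y 2 * u - y 3 * u + y 4 * (u ^ 2 - 2 * μ * u)
      from funext hp]
    fun_prop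
  have hfc : Continuous f := by
    rw [show f = fun u => p u + (∑ τ ∈ G, indG τ u * z τ) + x * indX u from funext hf]
    exact (hpc.add (continuous_finset_sum _ fun τ _ => (hGcont τ).mul continuous_const)).add
      (continuous_const.mul hXcont)
  set xc : ℝ := x * (Icc xm xp).indicator (fun _ => (1 : ℝ)) t with hxcdef
  have hqc : Continuous (fun s => p s + z τ₀ + xc) :=
    (hpc.add continuous_const).add continuous_const
  have hAclosed : IsClosed A := by
    rw [hAdef]
    refine (isClosed_Icc.union isClosed_Icc).union ?_
    exact Set.Finite.isClosed_biUnion (G.finite_toSet) fun τ _ => isClosed_Icc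
  have hmono : ∀ s ∈ Set.uIcc pmin t,
      (fun s => p s + z τ₀ + xc) s ≤ (fun s => p s + z τ₀ + xc) t := by
    intro s hs
    simp only
    have hid : p t - p s = y 4 * ((t - s) * (s + t - 2 * pmin)) := by
      rw [hp s, hp t]; linear_combination (t - s) * hkey
    rcases Set.mem_uIcc.mp hs with ⟨h1, h2⟩ | ⟨h1, h2⟩
    · have hprod : 0 ≤ y 4 * ((t - s) * (s + t - 2 * pmin)) :=
        mul_nonneg hy5.le (mul_nonneg (by linarith) (by linarith))
      linarith
    · have hprod : 0 ≤ y 4 * ((t - s) * (s + t - 2 * pmin)) := by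
        have : 0 ≤ (s - t) * (2 * pmin - s - t) :=
          mul_nonneg (by linarith) (by linarith)
        nlinarith
      linarith
  -- the main exactness claim
  have hclaim : ∀ J : Set ℝ, t ∈ J → (∀ s ∈ J, ∀ u ∈ Set.uIcc s t, u ∈ J) →
      (∀ s ∈ J, s ∉ A) → ∀ s ∈ J, f s = (fun s => p s + z τ₀ + xc) s := by
    intro J htJ hconv havoid s hsJ
    have hAJ : ∀ u ∈ Set.uIcc s t, u ∉ A := fun u hu => havoid u (hconv s hsJ u hu)
    have hsA := havoid s hsJ
    have hsxm : δ < |s - xm| := habs s xm (hnotA s hsA).1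
    have hsxp : δ < |s - xp| := habs s xp (hnotA s hsA).2.1
    have hsG : ∀ τ ∈ G, δ < |s - τ| := fun τ hτ => habs s τ ((hnotA s hsA).2.2 τ hτ)
    have hsM : s < M - δ := by
      by_contra h
      push_neg at h
      exact hAJ (M - δ) (Set.mem_uIcc.mpr (Or.inr ⟨by linarith, h⟩))
        (hAIcc M hMG _ ⟨by linarith, by linarith⟩)
    have hsτ₀ : τ₀ < s := by
      by_contra h
      push_neg at h
      exact hAJ τ₀ (Set.mem_uIcc.mpr (Or.inl ⟨h, by linarith⟩))
        (hAIcc τ₀ hτ₀G _ ⟨by linarith, by linarith⟩)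
    have hsτ₁ : s < τ₀ + δN := by
      by_contra h
      push_neg at h
      exact hAJ (τ₀ + δN) (Set.mem_uIcc.mpr (Or.inr ⟨by linarith, h⟩))
        (hAIcc _ hτ₁G _ ⟨by linarith, by linarith⟩)
    have hindX : (Icc xm xp).indicator (fun _ => (1 : ℝ)) s
        = (Icc xm xp).indicator (fun _ => (1 : ℝ)) t := by
      by_cases hsmem : s ∈ Icc xm xp <;> by_cases htmem : t ∈ Icc xm xp
      · rw [Set.indicator_of_mem hsmem, Set.indicator_of_mem htmem]
      · exfalso
        rw [Set.mem_Icc, not_and_or, not_le, not_le] at htmem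
        rcases htmem with h | h
        · exact hAJ xm (Set.mem_uIcc.mpr (Or.inr ⟨h.le, hsmem.1⟩)) hxmA
        · exact hAJ xp (Set.mem_uIcc.mpr (Or.inl ⟨hsmem.2, h.le⟩)) hxpA
      · exfalso
        rw [Set.mem_Icc, not_and_or, not_le, not_le] at hsmem
        rcases hsmem with h | h
        · exact hAJ xm (Set.mem_uIcc.mpr (Or.inl ⟨h.le, htmem.1⟩)) hxmA
        · exact hAJ xp (Set.mem_uIcc.mpr (Or.inr ⟨htmem.2, h.le⟩)) hxpA
      · rw [Set.indicator_of_notMem hsmem, Set.indicator_of_notMem htmem]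
    have hsum : (∑ τ ∈ G, indG τ s * z τ) = z τ₀ := by
      have hexact : ∀ τ ∈ G, indG τ s = (Ico τ (τ + δN)).indicator (fun _ => (1 : ℝ)) s := by
        intro τ hτ
        refine hGeq τ s (hsG τ hτ) ?_
        obtain ⟨k, hkn, hkτ⟩ := hGrev τ hτ
        rcases lt_or_eq_of_le hkn with hlt' | heq'
        · have hsucc : τ + δN ∈ G := by
            have h := hGmem (k + 1) hlt'
            rwa [show ((k + 1 : ℕ) : ℝ) * δN = τ + δN by push_cast; rw [← hkτ]; ring] at h
          exact hsG _ hsucc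
        · have hτM : τ = M := by rw [← hkτ, heq', hM]
          rw [lt_abs]; right; rw [hτM]; simp only [neg_sub]; linarith
      rw [Finset.sum_congr rfl (fun τ hτ => by rw [hexact τ hτ])]
      rw [Finset.sum_eq_single τ₀]
      · rw [Set.indicator_of_mem (Set.mem_Ico.mpr ⟨hsτ₀.le, hsτ₁⟩)]; exact one_mul _
      · intro b hb hbne
        obtain ⟨k, hkn, hkb⟩ := hGrev b hb
        have hkk0 : k ≠ k₀ := by
          rintro rfl
          exact hbne (by rw [← hkb, hτ₀def])
        rcases lt_or_gt_of_ne hkk0 with h | h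
        · have hble : b + δN ≤ τ₀ := by
            rw [← hkb, hτ₀def]
            have : ((k : ℝ) + 1) ≤ (k₀ : ℝ) := by exact_mod_cast h
            nlinarith
          rw [Set.indicator_of_notMem (fun hmem => absurd (Set.mem_Ico.mp hmem).2 (not_lt.mpr (by linarith))),
            zero_mul]
        · have hble : τ₀ + δN ≤ b := by
            rw [← hkb, hτ₀def]
            have : ((k₀ : ℝ) + 1) ≤ (k : ℝ) := by exact_mod_cast h
            nlinarith
          rw [Set.indicator_of_notMem (fun hmem => absurd (Set.mem_Ico.mp hmem).1 (not_le.mpr (by linarith))),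
            zero_mul]
      · intro h; exact absurd hτ₀G h
    rw [hf s, hsum, hXeq s hsxm hsxp, hindX]
  -- apply the auxiliary lemma
  have hmain := crucial_aux f (fun s => p s + z τ₀ + xc) A hAclosed hfc hqc t pmin htA hft
    hclaim hmono
  rcases hmain with h | ⟨s0, hs0A, hs0mem, hs0f, hs0avoid⟩
  · exact Or.inl h
  · right
    refine ⟨s0, ⟨?_, ?_⟩, hs0f, hs0A⟩
    · by_contra h
      push_neg at h
      exact hs0avoid 0 (Set.mem_uIcc.mpr (Or.inl ⟨h.le, htT.1⟩)) h.ne'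
        (hAIcc 0 h0G 0 ⟨by linarith, by linarith⟩)
    · by_contra h
      push_neg at h
      exact hs0avoid M (Set.mem_uIcc.mpr (Or.inr ⟨htT.2, h.le⟩)) h.ne
        (hAIcc M hMG M ⟨by linarith, by linarith⟩)
end

section
/- Binary encoding of the interval indicator (core claim in the proof of Theorem 2): let x⁻, x⁺ ∈ T_N with x⁻ ≤ x⁺, and let b̃, Δ⁻, Δ⁺ ∈ {0,1}^{T_N} (with b̃_{t̄} := 0 for t̄ ∉ T_N) satisfy Σ_{t̄∈T_N} (Δ⁺_{t̄} + Δ⁻_{t̄}) ≤ 2, b̃_{t̄+δ_N} − b̃_{t̄} = Δ⁻_{t̄} − Δ⁺_{t̄} for all t̄ ∈ T_N, x⁺ − x⁻ = Σ_{t̄∈T_N} b̃_{t̄} − 1, x⁻ = Σ_{t̄∈T_N} (t̄ + δ_N) Δ⁻_{t̄}, and x⁺ = Σ_{t̄∈T_N} t̄ Δ⁺_{t̄}. Then for every t̄ ∈ T_N, b̃_{t̄} = 1 if and only if x⁻ ≤ t̄ ≤ x⁺ (i.e., b̃_{t̄} = 𝟙_{[x⁻,x⁺]}(t̄)). -/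
open Finset

private lemma telescope' {a d : ℕ → ℝ} {n : ℕ}
    (h : ∀ k ≤ n, a (k + 1) - a k = d k) :
    ∀ k ≤ n + 1, a k = a 0 + ∑ j ∈ range k, d j := by
  intro k hk
  induction k with
  | zero => simp
  | succ k ih =>
    have hk' : k ≤ n := Nat.lt_succ_iff.mp hk
    have h1 := h k hk'
    have h2 := ih (by omega)
    rw [Finset.sum_range_succ]
    linarith

private lemma sum_ind' {f : ℕ → ℝ} {n j : ℕ}
    (hfj : f j = 1) (hother : ∀ k ≤ n, k ≠ j → f k = 0) :
    ∀ k ≤ n + 1, ∑ l ∈ range k, f l = if j < k then 1 else 0 := by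
  intro k hk
  by_cases h : j < k
  · rw [if_pos h, Finset.sum_eq_single_of_mem j (Finset.mem_range.mpr h)]
    · exact hfj
    · intro l hl hlj
      have := Finset.mem_range.mp hl
      exact hother l (by omega) hlj
  · rw [if_neg h]
    apply Finset.sum_eq_zero
    intro l hl
    have := Finset.mem_range.mp hl
    exact hother l (by omega) (by omega)

private lemma sum_mul_ind' {f : ℕ → ℝ} (g : ℕ → ℝ) {n j : ℕ} (hj : j ≤ n)
    (hfj : f j = 1) (hother : ∀ k ≤ n, k ≠ j → f k = 0) :
    ∑ k ∈ range (n + 1), g k * f k = g j := by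
  rw [Finset.sum_eq_single_of_mem j (Finset.mem_range.mpr (by omega))]
  · rw [hfj, mul_one]
  · intro l hl hlj
    have := Finset.mem_range.mp hl
    rw [hother l (by omega) hlj, mul_zero]

private lemma unique_one' {f : ℕ → ℝ} {n j : ℕ}
    (h01 : ∀ k ≤ n, f k = 0 ∨ f k = 1)
    (hsum : ∑ k ∈ range (n + 1), f k < 2)
    (hj : j ≤ n) (hfj : f j = 1) :
    ∀ k ≤ n, k ≠ j → f k = 0 := by
  intro k hk hkj
  rcases h01 k hk with h | h
  · exact h
  exfalso
  have hsub : ({j, k} : Finset ℕ) ⊆ range (n + 1) := by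
    intro x hx
    simp only [Finset.mem_insert, Finset.mem_singleton] at hx
    rcases hx with rfl | rfl <;> exact Finset.mem_range.mpr (by omega)
  have h2 : f j + f k ≤ ∑ l ∈ range (n + 1), f l := by
    rw [← Finset.sum_pair (Ne.symm hkj)]
    apply Finset.sum_le_sum_of_subset_of_nonneg hsub
    intro l hl _
    have := Finset.mem_range.mp hl
    rcases h01 l (by omega) with h' | h' <;> simp [h']
  rw [hfj, h] at h2
  linarith

private lemma key_lemma (δ : ℝ) (hδ : 0 < δ) (n : ℕ) (a dm dp : ℕ → ℝ)
    (ha : ∀ k ≤ n, a k = 0 ∨ a k = 1)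
    (ha' : a (n + 1) = 0)
    (hdm : ∀ k ≤ n, dm k = 0 ∨ dm k = 1)
    (hdp : ∀ k ≤ n, dp k = 0 ∨ dp k = 1)
    (hsum2 : ∑ k ∈ range (n + 1), (dp k + dm k) ≤ 2)
    (hstep : ∀ k ≤ n, a (k + 1) - a k = dm k - dp k)
    (xm xp : ℝ) (hord : xm ≤ xp)
    (hcount : xp - xm = (∑ k ∈ range (n + 1), a k) - 1)
    (hxm : xm = ∑ k ∈ range (n + 1), ((k : ℝ) * δ + δ) * dm k)
    (hxp : xp = ∑ k ∈ range (n + 1), ((k : ℝ) * δ) * dp k) :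
    ∀ k ≤ n, (a k = 1 ↔ xm ≤ (k : ℝ) * δ ∧ (k : ℝ) * δ ≤ xp) := by
  have hcast : ∀ p q : ℕ, ((p : ℝ) * δ ≤ (q : ℝ) * δ ↔ p ≤ q) := by
    intro p q
    rw [mul_le_mul_iff_of_pos_right hδ, Nat.cast_le]
  have htel := telescope' hstep
  have hdmnn : ∀ k ∈ range (n + 1), (0 : ℝ) ≤ dm k := by
    intro k hk
    have := Finset.mem_range.mp hk
    rcases hdm k (by omega) with h | h <;> simp [h]
  have hdpnn : ∀ k ∈ range (n + 1), (0 : ℝ) ≤ dp k := by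
    intro k hk
    have := Finset.mem_range.mp hk
    rcases hdp k (by omega) with h | h <;> simp [h]
  have hsplit : ∑ k ∈ range (n + 1), (dp k + dm k)
      = (∑ k ∈ range (n + 1), dp k) + ∑ k ∈ range (n + 1), dm k :=
    Finset.sum_add_distrib
  have htelsub : ∀ k ≤ n + 1, a k = a 0 +
      ((∑ l ∈ range k, dm l) - ∑ l ∈ range k, dp l) := by
    intro k hk
    rw [htel k hk, Finset.sum_sub_distrib]
  have ha0 : a 0 = (∑ k ∈ range (n + 1), dp k) - ∑ k ∈ range (n + 1), dm k := by
    have := htelsub (n + 1) le_rfl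
    rw [ha'] at this
    linarith
  by_cases hm : ∃ i, i ≤ n ∧ dm i = 1
  · -- Δ⁻ has a one at i; then Δ⁺ must have a one at some j with i < j
    obtain ⟨i, hi, hmi⟩ := hm
    have hSm1 : (1 : ℝ) ≤ ∑ k ∈ range (n + 1), dm k := by
      have := Finset.single_le_sum hdmnn (Finset.mem_range.mpr (by omega : i < n + 1))
      rw [hmi] at this; exact this
    have hp : ∃ j, j ≤ n ∧ dp j = 1 := by
      by_contra hp
      push_neg at hp
      have hdp0 : ∑ k ∈ range (n + 1), dp k = 0 := by
        apply Finset.sum_eq_zero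
        intro k hk
        have := Finset.mem_range.mp hk
        rcases hdp k (by omega) with h | h
        · exact h
        · exact absurd h (hp k (by omega))
      rcases ha 0 (by omega) with h | h <;> rw [h] at ha0 <;> rw [hdp0] at ha0 <;> linarith
    obtain ⟨j, hj, hpj⟩ := hp
    have hSp1 : (1 : ℝ) ≤ ∑ k ∈ range (n + 1), dp k := by
      have := Finset.single_le_sum hdpnn (Finset.mem_range.mpr (by omega : j < n + 1))
      rw [hpj] at this; exact this
    have hSmlt : ∑ k ∈ range (n + 1), dm k < 2 := by
      rw [hsplit] at hsum2; linarith
    have hSplt : ∑ k ∈ range (n + 1), dp k < 2 := by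
      rw [hsplit] at hsum2; linarith
    have hmo : ∀ k ≤ n, k ≠ i → dm k = 0 := unique_one' hdm hSmlt hi hmi
    have hpo : ∀ k ≤ n, k ≠ j → dp k = 0 := unique_one' hdp hSplt hj hpj
    have hxmv : xm = (i : ℝ) * δ + δ := by
      rw [hxm, sum_mul_ind' (fun k => (k : ℝ) * δ + δ) hi hmi hmo]
    have hxpv : xp = (j : ℝ) * δ := by
      rw [hxp, sum_mul_ind' (fun k => (k : ℝ) * δ) hj hpj hpo]
    have hij : i + 1 ≤ j := by
      have h1 : ((i : ℝ) + 1) * δ ≤ (j : ℝ) * δ := by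
        rw [hxmv, hxpv] at hord; linarith [hord]
      have h2 : ((i + 1 : ℕ) : ℝ) * δ ≤ (j : ℝ) * δ := by push_cast; linarith
      exact (hcast (i + 1) j).mp h2
    have ha0' : a 0 = 0 := by
      have hSmeq : ∑ k ∈ range (n + 1), dm k = 1 := by
        have : ∑ k ∈ range (n + 1), dm k = if i < n + 1 then 1 else 0 :=
          sum_ind' hmi hmo (n + 1) le_rfl
        rw [if_pos (by omega)] at this; exact this
      have hSpeq : ∑ k ∈ range (n + 1), dp k = 1 := by
        have : ∑ k ∈ range (n + 1), dp k = if j < n + 1 then 1 else 0 :=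
          sum_ind' hpj hpo (n + 1) le_rfl
        rw [if_pos (by omega)] at this; exact this
      rw [ha0, hSmeq, hSpeq]; ring
    intro k hk
    have hak : a k = (if i < k then (1 : ℝ) else 0) - (if j < k then 1 else 0) := by
      rw [htelsub k (by omega), ha0', sum_ind' hmi hmo k (by omega),
        sum_ind' hpj hpo k (by omega)]
      ring
    rw [hxmv, hxpv]
    constructor
    · intro h1
      rw [hak] at h1
      have hik : i < k := by
        by_contra hik
        rw [if_neg hik, if_neg (by omega)] at h1; norm_num at h1
      have hkj : k ≤ j := by
        by_contra hkj
        rw [if_pos hik, if_pos (by omega)] at h1; norm_num at h1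
      constructor
      · have := (hcast (i + 1) k).mpr (by omega)
        push_cast at this; linarith
      · exact (hcast k j).mpr hkj
    · rintro ⟨h1, h2⟩
      have hik : i + 1 ≤ k := by
        apply (hcast (i + 1) k).mp
        push_cast; linarith
      have hkj : k ≤ j := (hcast k j).mp h2
      rw [hak, if_pos (by omega), if_neg (by omega)]
      norm_num
  · -- Δ⁻ is zero everywhere
    push_neg at hm
    have hdm0 : ∀ k ≤ n, dm k = 0 := by
      intro k hk
      rcases hdm k hk with h | h
      · exact h
      · exact absurd h (hm k hk)
    have hxmv : xm = 0 := by
      rw [hxm]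
      apply Finset.sum_eq_zero
      intro k hk
      have := Finset.mem_range.mp hk
      rw [hdm0 k (by omega), mul_zero]
    have hSm0 : ∑ k ∈ range (n + 1), dm k = 0 := by
      apply Finset.sum_eq_zero
      intro k hk
      have := Finset.mem_range.mp hk
      exact hdm0 k (by omega)
    have hSmpart : ∀ k ≤ n + 1, ∑ l ∈ range k, dm l = 0 := by
      intro k hk
      apply Finset.sum_eq_zero
      intro l hl
      have := Finset.mem_range.mp hl
      exact hdm0 l (by omega)
    by_cases hp : ∃ j, j ≤ n ∧ dp j = 1
    · obtain ⟨j, hj, hpj⟩ := hp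
      have hSp1 : (1 : ℝ) ≤ ∑ k ∈ range (n + 1), dp k := by
        have := Finset.single_le_sum hdpnn (Finset.mem_range.mpr (by omega : j < n + 1))
        rw [hpj] at this; exact this
      have ha0' : a 0 = 1 := by
        rcases ha 0 (by omega) with h | h
        · exfalso; rw [h, hSm0] at ha0; linarith
        · exact h
      have hSplt : ∑ k ∈ range (n + 1), dp k < 2 := by
        rw [hSm0] at ha0; rw [ha0'] at ha0; linarith
      have hpo : ∀ k ≤ n, k ≠ j → dp k = 0 := unique_one' hdp hSplt hj hpj
      have hxpv : xp = (j : ℝ) * δ := by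
        rw [hxp, sum_mul_ind' (fun k => (k : ℝ) * δ) hj hpj hpo]
      intro k hk
      have hak : a k = 1 - (if j < k then (1 : ℝ) else 0) := by
        rw [htelsub k (by omega), ha0', hSmpart k (by omega),
          sum_ind' hpj hpo k (by omega)]
        ring
      rw [hxmv, hxpv]
      constructor
      · intro h1
        rw [hak] at h1
        have hkj : k ≤ j := by
          by_contra hkj
          rw [if_pos (by omega)] at h1; norm_num at h1
        constructor
        · positivity
        · exact (hcast k j).mpr hkj
      · rintro ⟨h1, h2⟩
        have hkj : k ≤ j := (hcast k j).mp h2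
        rw [hak, if_neg (by omega)]
        norm_num
    · -- everything is zero: contradiction with hcount
      exfalso
      push_neg at hp
      have hdp0 : ∀ k ≤ n, dp k = 0 := by
        intro k hk
        rcases hdp k hk with h | h
        · exact h
        · exact absurd h (hp k hk)
      have hSp0 : ∑ k ∈ range (n + 1), dp k = 0 := by
        apply Finset.sum_eq_zero
        intro k hk
        have := Finset.mem_range.mp hk
        exact hdp0 k (by omega)
      have hxpv : xp = 0 := by
        rw [hxp]
        apply Finset.sum_eq_zero
        intro k hk
        have := Finset.mem_range.mp hk
        rw [hdp0 k (by omega), mul_zero]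
      have ha0' : a 0 = 0 := by rw [ha0, hSm0, hSp0]; ring
      have haall : ∑ k ∈ range (n + 1), a k = 0 := by
        apply Finset.sum_eq_zero
        intro k hk
        have hk' := Finset.mem_range.mp hk
        rw [htelsub k (by omega), ha0', hSmpart k (by omega)]
        have : ∑ l ∈ range k, dp l = 0 := by
          apply Finset.sum_eq_zero
          intro l hl
          have := Finset.mem_range.mp hl
          exact hdp0 l (by omega)
        rw [this]; ring
      rw [haall, hxmv, hxpv] at hcount
      linarith

/-- Binary encoding of the interval indicator (core claim in the proof of Theorem 2):
on the grid `T_N = {0, δ_N, …, M}`, if `b̃, Δ⁻, Δ⁺ ∈ {0,1}^{T_N}` (with `b̃ = 0` off the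
grid) satisfy `Σ (Δ⁺ + Δ⁻) ≤ 2`, `b̃(t̄+δ_N) − b̃(t̄) = Δ⁻(t̄) − Δ⁺(t̄)` on the grid,
`x⁺ − x⁻ = Σ b̃ − 1`, `x⁻ = Σ (t̄+δ_N) Δ⁻(t̄)` and `x⁺ = Σ t̄ Δ⁺(t̄)`, then for every grid
point `t̄`, `b̃(t̄) = 1` iff `x⁻ ≤ t̄ ≤ x⁺`. -/
theorem binary_interval_encoding
    (M δN : ℝ) (n : ℕ) (hδN : 0 < δN) (hMpos : 0 < M) (hM : M = n * δN)
    (G : Finset ℝ) (hG : G = (Finset.range (n + 1)).image (fun k : ℕ => (k : ℝ) * δN))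
    (xm xp : ℝ) (hxm : xm ∈ G) (hxp : xp ∈ G) (hord : xm ≤ xp)
    (btil Δm Δp : ℝ → ℝ)
    (hbin : ∀ t ∈ G,
      (btil t = 0 ∨ btil t = 1) ∧ (Δm t = 0 ∨ Δm t = 1) ∧ (Δp t = 0 ∨ Δp t = 1))
    (hboff : ∀ t, t ∉ G → btil t = 0)
    (hsum2 : (∑ t ∈ G, (Δp t + Δm t)) ≤ 2)
    (hstep : ∀ t ∈ G, btil (t + δN) - btil t = Δm t - Δp t)
    (hcount : xp - xm = (∑ t ∈ G, btil t) - 1)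
    (hxmsum : xm = ∑ t ∈ G, (t + δN) * Δm t)
    (hxpsum : xp = ∑ t ∈ G, t * Δp t) :
    ∀ t ∈ G, (btil t = 1 ↔ xm ≤ t ∧ t ≤ xp) := by
  have hδne : δN ≠ 0 := ne_of_gt hδN
  have hinj : ∀ p q : ℕ, (p : ℝ) * δN = (q : ℝ) * δN → p = q := by
    intro p q h
    exact_mod_cast mul_right_cancel₀ hδne h
  have hmemG : ∀ k : ℕ, k ≤ n → (k : ℝ) * δN ∈ G := by
    intro k hk
    rw [hG]
    exact Finset.mem_image.mpr ⟨k, Finset.mem_range.mpr (by omega), rfl⟩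
  have hmemG' : ∀ t ∈ G, ∃ k : ℕ, k ≤ n ∧ (k : ℝ) * δN = t := by
    intro t ht
    rw [hG] at ht
    obtain ⟨k, hk, hkt⟩ := Finset.mem_image.mp ht
    exact ⟨k, Nat.lt_succ_iff.mp (Finset.mem_range.mp hk), hkt⟩
  have hsumG : ∀ f : ℝ → ℝ,
      ∑ t ∈ G, f t = ∑ k ∈ range (n + 1), f ((k : ℝ) * δN) := by
    intro f
    rw [hG, Finset.sum_image]
    intro p _ q _ h
    exact hinj p q h
  set a : ℕ → ℝ := fun k => btil ((k : ℝ) * δN) with ha_def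
  set dm : ℕ → ℝ := fun k => Δm ((k : ℝ) * δN) with hdm_def
  set dp : ℕ → ℝ := fun k => Δp ((k : ℝ) * δN) with hdp_def
  have ha : ∀ k ≤ n, a k = 0 ∨ a k = 1 := fun k hk => (hbin _ (hmemG k hk)).1
  have hdm : ∀ k ≤ n, dm k = 0 ∨ dm k = 1 := fun k hk => (hbin _ (hmemG k hk)).2.1
  have hdp : ∀ k ≤ n, dp k = 0 ∨ dp k = 1 := fun k hk => (hbin _ (hmemG k hk)).2.2
  have ha' : a (n + 1) = 0 := by
    apply hboff
    intro hmem
    obtain ⟨k, hk, hkt⟩ := hmemG' _ hmem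
    have : k = n + 1 := hinj k (n + 1) (by exact_mod_cast hkt)
    omega
  have hstep' : ∀ k ≤ n, a (k + 1) - a k = dm k - dp k := by
    intro k hk
    have h := hstep _ (hmemG k hk)
    have heq : ((k : ℝ) + 1) * δN = (k : ℝ) * δN + δN := by ring
    simp only [ha_def, hdm_def, hdp_def]
    push_cast
    rw [heq]
    exact h
  have hkey := key_lemma δN hδN n a dm dp ha ha' hdm hdp
    (by rw [← hsumG (fun t => Δp t + Δm t)]; exact hsum2)
    hstep' xm xp hord
    (by rw [← hsumG btil] at *; exact hcount)
    (by rw [hsumG (fun t => (t + δN) * Δm t)] at hxmsum; exact hxmsum)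
    (by rw [hsumG (fun t => t * Δp t)] at hxpsum; exact hxpsum)
  intro t ht
  obtain ⟨k, hk, rfl⟩ := hmemG' t ht
  exact hkey k hk
end
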